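/- Example 1.1, regularity and exterior equation: The function u is continuously differentiable on ℝ with u'(w) = u'(−w) = 0, and for every x with |x| > w, u''(x) + 2 tanh(x) u'(x) + (1 + 2/cosh²(x)) u(x) = 0 (equivalently, u'' + (2 tanh(x) u)' + u = 0 outside [−w, w]). -/

import Mathlib

/-!
Outside `[-w, w]`, `u(x) = φ(|x|)` with `φ = 2h sinh / cosh²`. Since `sinh w = 1`, `w` is a
critical point of `φ` with `φ(w) = h`, so `u(x) = φ(max w |x|)`: clamping a smooth function at a
critical point keeps it `C¹`, and composing with `|x|` does too because the result is constant
near `0`. The equation outside `[-w, w]` holds for every multiple `c sinh / cosh²`, by direct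
computation with `cosh² - sinh² = 1`; near `x < -w` the function `u` is the multiple with `c = -2h`.
-/

open MeasureTheory Set

noncomputable section

/-- `w = log(1 + √2)`. -/
noncomputable def exW : ℝ := Real.log (1 + Real.sqrt 2)

/-- `h = 1/(2(w + √2))`. -/
noncomputable def exH : ℝ := 1 / (2 * (exW + Real.sqrt 2))

/-- The flat-top stationary profile of Example 1.1. -/
noncomputable def exU (x : ℝ) : ℝ :=
  if |x| ≤ exW then exH else 2 * exH * Real.sinh |x| / (Real.cosh |x|) ^ 2

open Filter Topology Real

theorem hasDerivAt_comp_max_const {g g' : ℝ → ℝ} {a : ℝ} (hg : ∀ x, HasDerivAt g (g' x) x)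
    (ha : g' a = 0) (x : ℝ) : HasDerivAt (fun t => g (max a t)) (g' (max a x)) x := by
  rcases lt_trichotomy x a with hx | rfl | hx
  · rw [max_eq_left hx.le, ha]
    refine (hasDerivAt_const x (g a)).congr_of_eventuallyEq ?_
    filter_upwards [Iio_mem_nhds hx] with t ht
    rw [max_eq_left ht.le]
  · rw [max_self, ha]
    have hleft : HasDerivWithinAt (fun t => g (max x t)) 0 (Iic x) x :=
      (hasDerivWithinAt_const x _ (g x)).congr (fun t ht => by simp [max_eq_left (mem_Iic.1 ht)])
        (by simp)
    have hright : HasDerivWithinAt (fun t => g (max x t)) 0 (Ici x) x :=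
      (ha ▸ hg x).hasDerivWithinAt.congr (fun t ht => by simp [max_eq_right (mem_Ici.1 ht)])
        (by simp)
    simpa [Iic_union_Ici] using hleft.union hright
  · rw [max_eq_right hx.le]
    refine (hg x).congr_of_eventuallyEq ?_
    filter_upwards [Ioi_mem_nhds hx] with t ht
    rw [max_eq_right ht.le]

theorem ContDiff.comp_max_const_of_deriv_eq_zero {g : ℝ → ℝ} {a : ℝ} (hg : ContDiff ℝ 1 g)
    (ha : deriv g a = 0) : ContDiff ℝ 1 (fun t => g (max a t)) := by
  have hd := hasDerivAt_comp_max_const (fun x => (hg.differentiable one_ne_zero x).hasDerivAt) ha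
  rw [contDiff_one_iff_deriv, funext fun x => (hd x).deriv]
  exact ⟨fun x => (hd x).differentiableAt,
    (hg.continuous_deriv le_rfl).comp (continuous_const.max continuous_id)⟩

theorem ContDiff.comp_abs_of_eventually_const {F : ℝ → ℝ} {n : ℕ∞} (hF : ContDiff ℝ n F)
    (h0 : ∀ᶠ t in 𝓝 0, F t = F 0) : ContDiff ℝ n (fun x => F |x|) := by
  refine contDiff_iff_contDiffAt.2 fun x => ?_
  rcases eq_or_ne x 0 with rfl | hx
  · refine (contDiffAt_const (c := F 0)).congr_of_eventuallyEq ?_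
    exact (continuous_abs.tendsto' 0 0 abs_zero).eventually h0
  · exact hF.contDiffAt.comp x (contDiffAt_abs hx)

def exProfile (c x : ℝ) : ℝ := c * sinh x / cosh x ^ 2

def exProfileDeriv (c x : ℝ) : ℝ := c * (1 - sinh x ^ 2) / cosh x ^ 3

theorem hasDerivAt_exProfile (c x : ℝ) : HasDerivAt (exProfile c) (exProfileDeriv c x) x := by
  have h := ((hasDerivAt_sinh x).const_mul c).div ((hasDerivAt_cosh x).pow 2)
    (pow_ne_zero 2 (cosh_pos x).ne')
  refine h.congr_deriv ?_
  simp only [Pi.pow_apply, exProfileDeriv]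
  field_simp
  linear_combination (c * cosh x) * cosh_sq_sub_sinh_sq x

theorem hasDerivAt_exProfileDeriv (c x : ℝ) :
    HasDerivAt (exProfileDeriv c) (c * sinh x * (cosh x ^ 2 - 6) / cosh x ^ 4) x := by
  have h := (((hasDerivAt_sinh x).pow 2).const_sub 1 |>.const_mul c).div
    ((hasDerivAt_cosh x).pow 3) (pow_ne_zero 3 (cosh_pos x).ne')
  refine h.congr_deriv ?_
  simp only [Pi.pow_apply]
  field_simp
  linear_combination (-3 * c * sinh x * cosh x ^ 2) * cosh_sq_sub_sinh_sq x

theorem deriv_exProfile (c : ℝ) : deriv (exProfile c) = exProfileDeriv c :=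
  funext fun x => (hasDerivAt_exProfile c x).deriv

theorem exProfile_ode (c x : ℝ) :
    c * sinh x * (cosh x ^ 2 - 6) / cosh x ^ 4 + 2 * tanh x * exProfileDeriv c x
      + (1 + 2 / cosh x ^ 2) * exProfile c x = 0 := by
  rw [tanh_eq_sinh_div_cosh, exProfileDeriv, exProfile]
  field_simp [(cosh_pos x).ne']
  linear_combination (2 * c * sinh x) * cosh_sq_sub_sinh_sq x

theorem exProfile_neg (c x : ℝ) : exProfile c (-x) = exProfile (-c) x := by
  simp [exProfile, neg_div]

theorem contDiff_exProfile {n : WithTop ℕ∞} (c : ℝ) : ContDiff ℝ n (exProfile c) :=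
  (contDiff_const.mul contDiff_sinh).div (contDiff_cosh.pow 2) fun x => by positivity

theorem sinh_exW : sinh exW = 1 := by
  have h2 : sqrt 2 ^ 2 = 2 := sq_sqrt zero_le_two
  rw [exW, sinh_log (by positivity)]
  field_simp
  linear_combination h2

theorem exW_pos : 0 < exW :=
  log_pos (by linarith [sqrt_pos.2 (zero_lt_two' ℝ)])

theorem exProfileDeriv_exW (c : ℝ) : exProfileDeriv c exW = 0 := by
  simp [exProfileDeriv, sinh_exW]

theorem exProfile_exW : exProfile (2 * exH) exW = exH := by
  have hcosh : cosh exW ^ 2 = 2 := by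
    linear_combination cosh_sq_sub_sinh_sq exW + (sinh exW + 1) * sinh_exW
  rw [exProfile, sinh_exW, hcosh]
  ring

theorem exU_eq_exProfile_max_abs : exU = fun x => exProfile (2 * exH) (max exW |x|) := by
  funext x
  rw [exU]
  split_ifs with hx
  · rw [max_eq_left hx, exProfile_exW]
  · rw [max_eq_right (not_le.1 hx).le, exProfile]

theorem contDiff_exU : ContDiff ℝ 1 exU := by
  rw [exU_eq_exProfile_max_abs]
  refine ContDiff.comp_abs_of_eventually_const
    ((contDiff_exProfile _).comp_max_const_of_deriv_eq_zero ?_) ?_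
  · rw [deriv_exProfile, exProfileDeriv_exW]
  · filter_upwards [Iio_mem_nhds exW_pos] with t ht
    rw [max_eq_left ht.le, max_eq_left exW_pos.le]

theorem deriv_exU_of_abs_eq {x : ℝ} (hx : |x| = exW) : deriv exU x = 0 := by
  have hx0 : x ≠ 0 := by
    rintro rfl
    exact exW_pos.ne (by simpa using hx)
  have hF := hasDerivAt_comp_max_const (hasDerivAt_exProfile (2 * exH)) (exProfileDeriv_exW _) |x|
  rw [exU_eq_exProfile_max_abs]
  refine (hF.comp x (hasDerivAt_abs hx0)).deriv.trans ?_
  rw [hx, max_self, exProfileDeriv_exW, zero_mul]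

theorem exU_eventuallyEq_exProfile {x : ℝ} (hx : exW < |x|) : ∃ c, exU =ᶠ[𝓝 x] exProfile c := by
  rw [exU_eq_exProfile_max_abs]
  rcases lt_abs.1 hx with hx | hx
  · refine ⟨2 * exH, ?_⟩
    filter_upwards [Ioi_mem_nhds hx] with y hy
    rw [abs_of_pos (exW_pos.trans hy), max_eq_right hy.le]
  · refine ⟨-(2 * exH), ?_⟩
    filter_upwards [Iio_mem_nhds (lt_neg_of_lt_neg hx)] with y hy
    rw [abs_of_neg (hy.trans (neg_neg_of_pos exW_pos)), max_eq_right (le_neg_of_le_neg hy.le),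
      exProfile_neg]

/-- Example 1.1, regularity and exterior equation: `u` is `C¹` on `ℝ`, `u'(±w) = 0`, and
`u'' + 2 tanh(x) u' + (1 + 2/cosh²x) u = 0` for `|x| > w`. -/
theorem stmt14 :
    ContDiff ℝ 1 exU ∧
    deriv exU exW = 0 ∧ deriv exU (-exW) = 0 ∧
    (∀ x : ℝ, exW < |x| →
      deriv (deriv exU) x + 2 * Real.tanh x * deriv exU x
        + (1 + 2 / (Real.cosh x) ^ 2) * exU x = 0) := by
  refine ⟨contDiff_exU, deriv_exU_of_abs_eq (abs_of_pos exW_pos),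
    deriv_exU_of_abs_eq (by rw [abs_neg, abs_of_pos exW_pos]), fun x hx => ?_⟩
  obtain ⟨c, hc⟩ := exU_eventuallyEq_exProfile hx
  have hc' : deriv exU =ᶠ[𝓝 x] exProfileDeriv c := deriv_exProfile c ▸ hc.deriv
  rw [hc'.deriv_eq, hc'.eq_of_nhds, hc.eq_of_nhds, (hasDerivAt_exProfileDeriv c x).deriv]
  exact exProfile_ode c x
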